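/- arXiv:1510.07301 — 2 statements merged into one kernel-verified Lean document; each statement's English description precedes it below -/
import Mathlib

section
/- For nonnegative integer N, ν ∈ {0,1}, and any integer k, the generating function for the number of partitions (repetitions allowed) into parts ≤ 2N+ν with BG-rank equal to k is q^{2k²−k} / ((q²;q²)_{N+k} (q²;q²)_{N−k+ν}). -/
def IsDistinctPartition (π : List ℕ) : Prop :=
  π.Chain' (· > ·) ∧ ∀ p ∈ π, 0 < p

def IsPartition (π : List ℕ) : Prop :=
  π.Chain' (· ≥ ·) ∧ ∀ p ∈ π, 0 < p

def oddIdxOdd (π : List ℕ) : ℕ :=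
  ((π.zipIdx.map Prod.swap).filter fun p => p.1 % 2 == 0 && p.2 % 2 == 1).length

def evenIdxOdd (π : List ℕ) : ℕ :=
  ((π.zipIdx.map Prod.swap).filter fun p => p.1 % 2 == 1 && p.2 % 2 == 1).length

def bgRank (π : List ℕ) : ℤ := (oddIdxOdd π : ℤ) - evenIdxOdd π

def altSum : List ℕ → ℤ
  | [] => 0
  | a :: t => (a : ℤ) - altSum t

noncomputable def gaussPoly : ℕ → ℕ → Polynomial ℚ
  | _, 0 => 1
  | 0, _ + 1 => 0
  | m + 1, r + 1 => gaussPoly m r + Polynomial.X ^ (r + 1) * gaussPoly m (r + 1)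

noncomputable def gaussZ (m : ℕ) (r : ℤ) : Polynomial ℚ :=
  if 0 ≤ r then gaussPoly m r.toNat else 0


/-!
Let `F_L(k)` be the generating function of partitions into parts `≤ L` with BG-rank `k`.
Deleting the first part of a partition moves every other part by one position, so
`bgRank (a :: π) = (a mod 2) - bgRank π`. Removing one largest part `L + 1` therefore gives
`F_{L+1}(k) = F_L(k) + q^{L+1} F_{L+1}(c - k)` with `c = (L + 1) mod 2`, and using this twice,
`(1 - q^{2L+2}) F_{L+1}(k) = F_L(k) + q^{L+1} F_L(c - k)`.
The product side obeys the same recurrence by the splitting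
`1 - q^{2(a+b)} = (1 - q^{2b}) + q^{2b} (1 - q^{2a})`, and both sides agree at `L = 0`,
so induction on `L = 2N + ν` finishes the proof.
-/
open PowerSeries

theorem oddIdxOdd_cons (a : ℕ) (t : List ℕ) :
    oddIdxOdd (a :: t) = a % 2 + evenIdxOdd t := by
  have shift : (fun x : ℕ × ℕ => (x.2 + 1) % 2 == 0 && x.1 % 2 == 1) =
      fun x => x.2 % 2 == 1 && x.1 % 2 == 1 := by
    funext x; rcases Nat.mod_two_eq_zero_or_one x.2 with h | h <;> simp [Nat.add_mod, h]
  rcases Nat.mod_two_eq_zero_or_one a with ha | ha <;>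
    simp [oddIdxOdd, evenIdxOdd, List.zipIdx_succ, List.filter_map, Function.comp_def, ha, shift,
      add_comm]

theorem evenIdxOdd_cons (a : ℕ) (t : List ℕ) :
    evenIdxOdd (a :: t) = oddIdxOdd t := by
  have shift : (fun x : ℕ × ℕ => (x.2 + 1) % 2 == 1 && x.1 % 2 == 1) =
      fun x => x.2 % 2 == 0 && x.1 % 2 == 1 := by
    funext x; rcases Nat.mod_two_eq_zero_or_one x.2 with h | h <;> simp [Nat.add_mod, h]
  simp [oddIdxOdd, evenIdxOdd, List.zipIdx_succ, List.filter_map, Function.comp_def, shift]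

theorem bgRank_nil : bgRank [] = 0 := rfl

theorem bgRank_cons (a : ℕ) (t : List ℕ) : bgRank (a :: t) = ((a % 2 : ℕ) : ℤ) - bgRank t := by
  simp only [bgRank, oddIdxOdd_cons, evenIdxOdd_cons]
  push_cast
  ring

theorem IsPartition.cons {a : ℕ} {t : List ℕ} (ht : IsPartition t) (ha : 0 < a)
    (hle : ∀ p ∈ t, p ≤ a) : IsPartition (a :: t) :=
  ⟨List.isChain_cons.2 ⟨fun b hb => hle b (List.mem_of_mem_head? hb), ht.1⟩,
    List.forall_mem_cons.2 ⟨ha, ht.2⟩⟩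

theorem IsPartition.tail {π : List ℕ} (h : IsPartition π) : IsPartition π.tail :=
  ⟨h.1.tail, fun p hp => h.2 p (List.mem_of_mem_tail hp)⟩

theorem IsPartition.eq_cons_of_mem {π : List ℕ} {m : ℕ} (h : IsPartition π)
    (hle : ∀ p ∈ π, p ≤ m) (hm : m ∈ π) : π = m :: π.tail := by
  cases π with
  | nil => simp at hm
  | cons a t =>
    have ha : m ≤ a := by
      rcases List.mem_cons.1 hm with rfl | hmt
      · exact le_rfl
      · exact List.rel_of_pairwise_cons (List.isChain_iff_pairwise.1 h.1) hmt
    simp [le_antisymm (hle a List.mem_cons_self) ha]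

theorem IsPartition.eq_nil {π : List ℕ} (h : IsPartition π) (hle : ∀ p ∈ π, p ≤ 0) : π = [] :=
  List.eq_nil_iff_forall_not_mem.2 fun p hp => (h.2 p hp).ne' (Nat.le_zero.1 (hle p hp))

abbrev BGPartition (L n : ℕ) (k : ℤ) : Type :=
  {π : List ℕ // IsPartition π ∧ (∀ p ∈ π, p ≤ L) ∧ π.sum = n ∧ bgRank π = k}

instance (L n : ℕ) (k : ℤ) : Finite (BGPartition L n k) := by
  refine Finite.of_injective (fun π : BGPartition L n k =>
    (⟨π.1, fun hp => π.2.1.2 _ hp, by simpa using π.2.2.2.1⟩ : Nat.Partition n)) ?_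
  intro π σ h
  have hperm : π.1.Perm σ.1 := Multiset.coe_eq_coe.1 (congrArg Nat.Partition.parts h)
  exact Subtype.ext (hperm.eq_of_pairwise (fun a b _ _ hab hba => le_antisymm hba hab)
    (List.isChain_iff_pairwise.1 π.2.1.1) (List.isChain_iff_pairwise.1 σ.2.1.1))

theorem card_bgPartition_zero (n : ℕ) (k : ℤ) :
    Nat.card (BGPartition 0 n k) = if n = 0 ∧ k = 0 then 1 else 0 := by
  have hnil (π : BGPartition 0 n k) : π.1 = [] := π.2.1.eq_nil π.2.2.1
  split_ifs with h
  · obtain ⟨rfl, rfl⟩ := h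
    have : Subsingleton (BGPartition 0 0 0) :=
      ⟨fun π σ => Subtype.ext ((hnil π).trans (hnil σ).symm)⟩
    exact Nat.card_of_subsingleton ⟨[], ⟨List.isChain_nil, by simp⟩, by simp, rfl, bgRank_nil⟩
  · have : IsEmpty (BGPartition 0 n k) := ⟨fun π => h (by
      have hs := π.2.2.2.1
      have hr := π.2.2.2.2
      rw [hnil π] at hs hr
      exact ⟨hs.symm, hr.symm⟩)⟩
    exact Nat.card_of_isEmpty

def BGPartition.notMemEquiv (L n : ℕ) (k : ℤ) :
    {π : BGPartition (L + 1) n k // L + 1 ∉ π.1} ≃ BGPartition L n k where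
  toFun π := ⟨π.1.1, π.1.2.1, fun p hp => Nat.le_of_lt_succ <|
    (π.1.2.2.1 p hp).lt_of_ne fun h => π.2 (h ▸ hp), π.1.2.2.2⟩
  invFun π := ⟨⟨π.1, π.2.1, fun p hp => (π.2.2.1 p hp).trans L.le_succ, π.2.2.2⟩,
    fun h => by simpa using π.2.2.1 _ h⟩
  left_inv _ := rfl
  right_inv _ := rfl

def BGPartition.consEquiv (L m : ℕ) (k : ℤ) :
    BGPartition (L + 1) m (((L + 1) % 2 : ℕ) - k) ≃
      {π : BGPartition (L + 1) (m + (L + 1)) k // L + 1 ∈ π.1} where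
  toFun π := ⟨⟨(L + 1) :: π.1, π.2.1.cons L.succ_pos π.2.2.1,
    List.forall_mem_cons.2 ⟨le_rfl, π.2.2.1⟩, by simp [π.2.2.2.1, add_comm],
    by rw [bgRank_cons, π.2.2.2.2]; ring⟩, List.mem_cons_self⟩
  invFun π :=
    have hπ := π.1.2.1.eq_cons_of_mem π.1.2.2.1 π.2
    ⟨π.1.1.tail, π.1.2.1.tail, fun p hp => π.1.2.2.1 p (List.mem_of_mem_tail hp),
      by have := π.1.2.2.2.1; rw [hπ, List.sum_cons] at this; omega,
      by have := π.1.2.2.2.2; rw [hπ, bgRank_cons] at this; omega⟩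
  left_inv _ := rfl
  right_inv π := Subtype.ext <| Subtype.ext (π.1.2.1.eq_cons_of_mem π.1.2.2.1 π.2).symm

theorem card_bgPartition_succ (L n : ℕ) (k : ℤ) :
    Nat.card (BGPartition (L + 1) n k) = Nat.card (BGPartition L n k) +
      if L + 1 ≤ n then Nat.card (BGPartition (L + 1) (n - (L + 1)) (((L + 1) % 2 : ℕ) - k))
      else 0 := by
  rw [← Nat.card_congr (Equiv.sumCompl fun π : BGPartition (L + 1) n k => L + 1 ∈ π.1),
    Nat.card_sum, add_comm, Nat.card_congr (BGPartition.notMemEquiv L n k)]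
  congr 1
  split_ifs with hn
  · obtain ⟨m, rfl⟩ := Nat.exists_eq_add_of_le' hn
    rw [Nat.add_sub_cancel, Nat.card_congr (BGPartition.consEquiv L m k)]
  · have : IsEmpty {π : BGPartition (L + 1) n k // L + 1 ∈ π.1} :=
      ⟨fun π => hn (π.1.2.2.2.1 ▸ List.le_sum_of_mem π.2)⟩
    exact Nat.card_of_isEmpty

noncomputable def bgGenFun (L : ℕ) (k : ℤ) : PowerSeries ℚ :=
  mk fun n => (Nat.card (BGPartition L n k) : ℚ)

theorem bgGenFun_zero (k : ℤ) : bgGenFun 0 k = if k = 0 then 1 else 0 := by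
  ext n
  rw [bgGenFun, coeff_mk, card_bgPartition_zero]
  split_ifs <;> simp_all [coeff_one]

theorem bgGenFun_succ (L : ℕ) (k : ℤ) :
    bgGenFun (L + 1) k =
      bgGenFun L k + X ^ (L + 1) * bgGenFun (L + 1) (((L + 1) % 2 : ℕ) - k) := by
  ext n
  rw [map_add, coeff_X_pow_mul']
  simp only [bgGenFun, coeff_mk]
  rw [card_bgPartition_succ]
  split_ifs <;> simp

theorem one_sub_X_pow_mul_bgGenFun_succ (L : ℕ) (k : ℤ) :
    (1 - X ^ (2 * L + 2)) * bgGenFun (L + 1) k =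
      bgGenFun L k + X ^ (L + 1) * bgGenFun L (((L + 1) % 2 : ℕ) - k) := by
  have h := bgGenFun_succ L (((L + 1) % 2 : ℕ) - k)
  rw [sub_sub_cancel] at h
  linear_combination bgGenFun_succ L k + X ^ (L + 1) * h

theorem constantCoeff_one_sub_X_pow {R : Type*} [Ring R] {j : ℕ} (hj : j ≠ 0) :
    constantCoeff (1 - X ^ j : PowerSeries R) = 1 := by
  simp [zero_pow hj]

theorem one_sub_X_pow_ne_zero {R : Type*} [Ring R] [Nontrivial R] {j : ℕ} (hj : j ≠ 0) :
    (1 - X ^ j : PowerSeries R) ≠ 0 :=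
  fun h => by simpa [h] using constantCoeff_one_sub_X_pow (R := R) hj

/-- `1 / (q²; q²)_a`, extended by zero to `a < 0` so that `invQPoch_sub_one` holds for every
integer `a`. -/
noncomputable def invQPoch (a : ℤ) : PowerSeries ℚ :=
  if 0 ≤ a then (∏ n ∈ Finset.range a.toNat, (1 - X ^ (2 * n + 2)))⁻¹ else 0

theorem invQPoch_of_neg {a : ℤ} (ha : a < 0) : invQPoch a = 0 := if_neg ha.not_ge

theorem invQPoch_zero : invQPoch 0 = 1 := by simp [invQPoch]

theorem invQPoch_sub_one (a : ℤ) : invQPoch (a - 1) = (1 - X ^ (2 * a).toNat) * invQPoch a := by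
  rcases lt_trichotomy a 0 with ha | rfl | ha
  · rw [invQPoch_of_neg ha, invQPoch_of_neg (by omega), mul_zero]
  · simp [invQPoch_of_neg]
  obtain ⟨m, rfl⟩ : ∃ m : ℕ, a = m + 1 := ⟨(a - 1).toNat, by omega⟩
  have hm : (2 * ((m : ℤ) + 1)).toNat = 2 * m + 2 := by omega
  simp only [invQPoch, add_sub_cancel_right, hm, if_pos (by positivity : (0 : ℤ) ≤ m),
    if_pos (by positivity : (0 : ℤ) ≤ m + 1), Int.toNat_natCast,
    show ((m : ℤ) + 1).toNat = m + 1 by omega, Finset.prod_range_succ, PowerSeries.mul_inv_rev,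
    ← mul_assoc]
  rw [PowerSeries.mul_inv_cancel _ (by simp [constantCoeff_one_sub_X_pow]), one_mul]

/-- From `1 - q^{2(a+b)} = (1 - q^{2b}) + q^{2b} (1 - q^{2a})`. The hypothesis `h` says
`q^m q^{e'} = q^e q^{2b}` with all exponents in `ℕ`; for `b < 0` both sides vanish anyway. -/
theorem one_sub_X_pow_mul_invQPoch_mul (a b : ℤ) {e e' m : ℕ} (h : (m + e' : ℤ) = e + 2 * b) :
    (1 - X ^ (2 * (a + b)).toNat) * (X ^ e * (invQPoch a * invQPoch b)) =
      X ^ e * (invQPoch a * invQPoch (b - 1)) +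
        X ^ m * (X ^ e' * (invQPoch (a - 1) * invQPoch b)) := by
  rw [invQPoch_sub_one a, invQPoch_sub_one b]
  rcases lt_or_ge a 0 with ha | ha
  · simp [invQPoch_of_neg ha]
  rcases lt_or_ge b 0 with hb | hb
  · simp [invQPoch_of_neg hb]
  have hab :
      (X : PowerSeries ℚ) ^ (2 * (a + b)).toNat = X ^ (2 * a).toNat * X ^ (2 * b).toNat := by
    rw [← pow_add]; congr 1; omega
  have hm : (X : PowerSeries ℚ) ^ m * X ^ e' = X ^ e * X ^ (2 * b).toNat := by
    rw [← pow_add, ← pow_add]; congr 1; omega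
  linear_combination -(invQPoch a * invQPoch b) * ((1 - X ^ (2 * a).toNat) * hm + X ^ e * hab)

theorem two_mul_sq_sub_self_nonneg (k : ℤ) : 0 ≤ 2 * k ^ 2 - k := by
  rcases le_or_gt k 0 with hk | hk <;> nlinarith

noncomputable def bgClosedForm (N ν : ℕ) (k : ℤ) : PowerSeries ℚ :=
  X ^ (2 * k ^ 2 - k).toNat * (invQPoch (N + k) * invQPoch (N - k + ν))

theorem bgClosedForm_zero_zero (k : ℤ) : bgClosedForm 0 0 k = if k = 0 then 1 else 0 := by
  split_ifs with hk
  · simp [bgClosedForm, hk, invQPoch_zero]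
  rcases lt_or_gt_of_ne hk with hk | hk
  · simp [bgClosedForm, invQPoch_of_neg hk]
  · simp [bgClosedForm, invQPoch_of_neg (neg_neg_of_pos hk)]

theorem one_sub_X_pow_mul_bgClosedForm_even (N : ℕ) (k : ℤ) :
    (1 - X ^ (2 * (2 * N) + 2)) * bgClosedForm N 1 k =
      bgClosedForm N 0 k + X ^ (2 * N + 1) * bgClosedForm N 0 (1 - k) := by
  have h := one_sub_X_pow_mul_invQPoch_mul (N + k) (N - k + 1) (m := 2 * N + 1)
    (e := (2 * k ^ 2 - k).toNat) (e' := (2 * (1 - k) ^ 2 - (1 - k)).toNat) (by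
      rw [Int.toNat_of_nonneg (two_mul_sq_sub_self_nonneg _),
        Int.toNat_of_nonneg (two_mul_sq_sub_self_nonneg _)]
      push_cast; ring)
  convert h using 3
  · congr 1; omega
  · simp [bgClosedForm]
  · simp [bgClosedForm]
  · rw [bgClosedForm, mul_comm (invQPoch _)]; congr 3 <;> push_cast <;> ring

theorem one_sub_X_pow_mul_bgClosedForm_odd (N : ℕ) (k : ℤ) :
    (1 - X ^ (2 * (2 * N + 1) + 2)) * bgClosedForm (N + 1) 0 k =
      bgClosedForm N 1 k + X ^ (2 * N + 2) * bgClosedForm N 1 (-k) := by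
  have h := one_sub_X_pow_mul_invQPoch_mul (N + 1 - k) (N + 1 + k) (m := 2 * N + 2)
    (e := (2 * k ^ 2 - k).toNat) (e' := (2 * (-k) ^ 2 - (-k)).toNat) (by
      rw [Int.toNat_of_nonneg (two_mul_sq_sub_self_nonneg _),
        Int.toNat_of_nonneg (two_mul_sq_sub_self_nonneg _)]
      push_cast; ring)
  convert h using 3
  · congr 1; omega
  · rw [bgClosedForm, mul_comm (invQPoch _)]; congr 3; push_cast; ring
  · rw [bgClosedForm, mul_comm (invQPoch _)]; congr 3 <;> push_cast <;> ring
  · rw [bgClosedForm]; congr 3 <;> push_cast <;> ring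

theorem bgGenFun_two_mul_add_one (N : ℕ) (h : ∀ k, bgGenFun (2 * N) k = bgClosedForm N 0 k)
    (k : ℤ) : bgGenFun (2 * N + 1) k = bgClosedForm N 1 k := by
  refine mul_left_cancel₀ (one_sub_X_pow_ne_zero (j := 2 * (2 * N) + 2) (by omega)) ?_
  rw [one_sub_X_pow_mul_bgGenFun_succ, one_sub_X_pow_mul_bgClosedForm_even,
    Nat.mul_add_mod_self_left, h, h]
  norm_num

theorem bgGenFun_two_mul_add_two (N : ℕ) (h : ∀ k, bgGenFun (2 * N + 1) k = bgClosedForm N 1 k)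
    (k : ℤ) : bgGenFun (2 * (N + 1)) k = bgClosedForm (N + 1) 0 k := by
  refine mul_left_cancel₀ (one_sub_X_pow_ne_zero (j := 2 * (2 * N + 1) + 2) (by omega)) ?_
  rw [show 2 * (N + 1) = 2 * N + 1 + 1 by ring, one_sub_X_pow_mul_bgGenFun_succ,
    one_sub_X_pow_mul_bgClosedForm_odd, show (2 * N + 1 + 1) % 2 = 0 by omega, h, h]
  norm_num

theorem bgGenFun_eq_bgClosedForm (N ν : ℕ) (hν : ν ≤ 1) (k : ℤ) :
    bgGenFun (2 * N + ν) k = bgClosedForm N ν k := by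
  have heven : ∀ N k, bgGenFun (2 * N) k = bgClosedForm N 0 k := by
    intro N
    induction N with
    | zero => intro k; rw [bgGenFun_zero, bgClosedForm_zero_zero]
    | succ N ih => exact bgGenFun_two_mul_add_two N (bgGenFun_two_mul_add_one N ih)
  interval_cases ν
  · exact heven N k
  · exact bgGenFun_two_mul_add_one N (heven N) k

theorem bgClosedForm_eq_ite (N ν : ℕ) (k : ℤ) :
    bgClosedForm N ν k =
      if 0 ≤ (N : ℤ) + k ∧ 0 ≤ (N : ℤ) - k + ν then
        X ^ (2 * k ^ 2 - k).toNat *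
          ((∏ n ∈ Finset.range ((N : ℤ) + k).toNat, (1 - (X : PowerSeries ℚ) ^ (2 * n + 2))) *
           (∏ n ∈ Finset.range ((N : ℤ) - k + ν).toNat, (1 - X ^ (2 * n + 2))))⁻¹
      else 0 := by
  rw [bgClosedForm]
  split_ifs with h
  · rw [invQPoch, invQPoch, if_pos h.1, if_pos h.2, PowerSeries.mul_inv_rev, mul_comm _⁻¹]
  · rcases not_and_or.1 h with h | h <;> simp [invQPoch_of_neg (not_le.1 h)]

theorem stmt9 (N ν : ℕ) (hν : ν ≤ 1) (k : ℤ) :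
    PowerSeries.mk (fun n =>
      (Nat.card {π : List ℕ // IsPartition π ∧ (∀ p ∈ π, p ≤ 2 * N + ν) ∧
        π.sum = n ∧ bgRank π = k} : ℚ)) =
    if 0 ≤ (N : ℤ) + k ∧ 0 ≤ (N : ℤ) - k + ν then
      PowerSeries.X ^ (2 * k ^ 2 - k).toNat *
        ((∏ n ∈ Finset.range ((N : ℤ) + k).toNat,
            (1 - (PowerSeries.X : PowerSeries ℚ) ^ (2 * n + 2))) *
         (∏ n ∈ Finset.range ((N : ℤ) - k + ν).toNat,
            (1 - PowerSeries.X ^ (2 * n + 2))))⁻¹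
    else 0 :=
  (bgGenFun_eq_bgClosedForm N ν hν k).trans (bgClosedForm_eq_ite N ν k)
end

section
/- For nonnegative integers N, i, j and ν ∈ {0,1}: Σ_{l=0}^{N} [N choose l]_{q²} [l+ν choose i]_{q²} [N−l choose j]_{q²} q^{N−l−j} = (−q;q)_{N−i−j+ν} [N+ν choose i, j]_{q²} (1 − ν q^{N+i−j+1})/(1 − ν q^{2(N+1)}). -/
/-! With `N = i + j + k`, the product `[N,l][l,i][N-l,j]` (Gaussian coefficients in base `q²`)
equals `[N; i, j]·[k, l-i]`, so the `ν = 0` sum is `[N; i, j]` times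
`T k = ∑ₘ [k,m] q^(k-m)`, and `T k = (-q;q)_k` because Pascal's rule gives
`T (k+1) = T k + q^(k+1) · T k` (the second copy arrives reflected, and symmetry of Gaussian
coefficients undoes the reflection).

For `ν = 1`, Pascal's rule `[l+1, i] = [l, i-1] + q^(2i) [l, i]` writes the sum as a combination
of two `ν = 0` sums. After multiplying by `1 - q^(2(N+1))`, the absorption identities
`[N; i, j](1 - Q^(N+1)) = [N+1; i+1, j](1 - Q^(i+1)) = [N+1; i, j](1 - Q^(k+1))` (with `Q = q²`)
turn both into multiples of `(-q;q)_(N+1-i-j) [N+1; i, j]`, with total factor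
`1 - q^(N+i+1-j)`. Every Gaussian identity is obtained in `ℚ[X]` by cancelling q-factorials from
`[r+s, r]·(Q;Q)_r·(Q;Q)_s = (Q;Q)_(r+s)`.
-/

open Polynomial Finset

noncomputable def qFactorial (n : ℕ) : ℚ[X] := ∏ k ∈ range n, (1 - X ^ (k + 1))

noncomputable def gaussTrinom (n i j : ℕ) : ℚ[X] := gaussPoly n i * gaussPoly (n - i) j

lemma gaussPoly_zero_right (m : ℕ) : gaussPoly m 0 = 1 := by cases m <;> rfl

lemma gaussPoly_succ_succ (m r : ℕ) :
    gaussPoly (m + 1) (r + 1) = gaussPoly m r + X ^ (r + 1) * gaussPoly m (r + 1) := rfl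

lemma gaussPoly_of_lt {m r : ℕ} (h : m < r) : gaussPoly m r = 0 := by
  induction m generalizing r with
  | zero => obtain ⟨s, rfl⟩ := Nat.exists_eq_succ_of_ne_zero h.ne'; rfl
  | succ m ih =>
    obtain ⟨s, rfl⟩ := Nat.exists_eq_succ_of_ne_zero (by omega : r ≠ 0)
    rw [gaussPoly_succ_succ, ih (by omega), ih (by omega), mul_zero, add_zero]

lemma gaussPoly_self (m : ℕ) : gaussPoly m m = 1 := by
  induction m with
  | zero => rfl
  | succ m ih => rw [gaussPoly_succ_succ, ih, gaussPoly_of_lt m.lt_succ_self, mul_zero, add_zero]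

lemma qFactorial_succ (n : ℕ) : qFactorial (n + 1) = qFactorial n * (1 - X ^ (n + 1)) :=
  prod_range_succ _ _

lemma qFactorial_ne_zero (n : ℕ) : qFactorial n ≠ 0 := by
  refine prod_ne_zero_iff.mpr fun k _ h => ?_
  simpa using congrArg (eval 0) h

lemma gaussPoly_mul_qFactorial {m r s : ℕ} (h : r + s = m) :
    gaussPoly m r * (qFactorial r * qFactorial s) = qFactorial m := by
  subst h
  induction r generalizing s with
  | zero => simp [gaussPoly_zero_right, qFactorial]
  | succ r ihr =>
    induction s with
    | zero => simp [gaussPoly_self, qFactorial]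
    | succ s ihs =>
      have h₁ := ihr (s := s + 1)
      rw [show r + (s + 1) = r + 1 + s by omega] at h₁
      rw [show r + 1 + (s + 1) = r + 1 + s + 1 by omega, gaussPoly_succ_succ, qFactorial_succ r,
        qFactorial_succ s, qFactorial_succ (r + 1 + s)]
      rw [qFactorial_succ r] at ihs
      rw [qFactorial_succ s] at h₁
      linear_combination (1 - X ^ (r + 1)) * h₁ + X ^ (r + 1) * (1 - X ^ (s + 1)) * ihs

lemma gaussPoly_symm {m r s : ℕ} (h : r + s = m) : gaussPoly m r = gaussPoly m s := by
  refine mul_right_cancel₀ (mul_ne_zero (qFactorial_ne_zero r) (qFactorial_ne_zero s)) ?_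
  rw [gaussPoly_mul_qFactorial h, mul_comm (qFactorial r),
    gaussPoly_mul_qFactorial ((add_comm s r).trans h)]

lemma gaussTrinom_mul_qFactorial {n i j k : ℕ} (h : i + j + k = n) :
    gaussTrinom n i j * (qFactorial i * qFactorial j * qFactorial k) = qFactorial n := by
  have h₁ := gaussPoly_mul_qFactorial (show i + (j + k) = n by omega)
  have h₂ := gaussPoly_mul_qFactorial (show j + k = j + k from rfl)
  rw [gaussTrinom, show n - i = j + k by omega]
  linear_combination gaussPoly n i * qFactorial i * h₂ + h₁

lemma gaussTrinom_of_lt {n i j : ℕ} (h : n < i + j) : gaussTrinom n i j = 0 := by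
  rcases lt_or_ge n i with hi | hi
  · rw [gaussTrinom, gaussPoly_of_lt hi, zero_mul]
  · rw [gaussTrinom, gaussPoly_of_lt (show n - i < j by omega), mul_zero]

lemma gaussPoly_mul_gaussPoly_mul_gaussPoly {n i j k m : ℕ} (h : i + j + k = n) (hm : m ≤ k) :
    gaussPoly n (i + m) * gaussPoly (i + m) i * gaussPoly (n - (i + m)) j =
      gaussTrinom n i j * gaussPoly k m := by
  refine mul_right_cancel₀ (mul_ne_zero (mul_ne_zero (mul_ne_zero (qFactorial_ne_zero i)
    (qFactorial_ne_zero j)) (qFactorial_ne_zero m)) (qFactorial_ne_zero (k - m))) ?_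
  have h₁ := gaussPoly_mul_qFactorial (show i + m + (n - (i + m)) = n by omega)
  have h₂ := gaussPoly_mul_qFactorial (show i + m = i + m from rfl)
  have h₃ := gaussPoly_mul_qFactorial (show j + (k - m) = n - (i + m) by omega)
  have h₄ := gaussTrinom_mul_qFactorial h
  have h₅ := gaussPoly_mul_qFactorial (show m + (k - m) = k by omega)
  linear_combination gaussPoly n (i + m) * gaussPoly (i + m) i * qFactorial i * qFactorial m * h₃
    + gaussPoly n (i + m) * qFactorial (n - (i + m)) * h₂ + h₁
    - gaussTrinom n i j * qFactorial i * qFactorial j * h₅ - h₄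

lemma gaussTrinom_succ_mul {n i j k : ℕ} (h : i + j + k = n) :
    gaussTrinom (n + 1) i j * (1 - X ^ (k + 1)) = gaussTrinom n i j * (1 - X ^ (n + 1)) := by
  refine mul_right_cancel₀ (mul_ne_zero (mul_ne_zero (qFactorial_ne_zero i)
    (qFactorial_ne_zero j)) (qFactorial_ne_zero k)) ?_
  have h₁ := gaussTrinom_mul_qFactorial (show i + j + (k + 1) = n + 1 by omega)
  rw [qFactorial_succ k, qFactorial_succ n] at h₁
  linear_combination h₁ - (1 - X ^ (n + 1)) * gaussTrinom_mul_qFactorial h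

lemma gaussTrinom_succ_succ_mul {n i j k : ℕ} (h : i + j + k = n) :
    gaussTrinom (n + 1) (i + 1) j * (1 - X ^ (i + 1)) =
      gaussTrinom n i j * (1 - X ^ (n + 1)) := by
  refine mul_right_cancel₀ (mul_ne_zero (mul_ne_zero (qFactorial_ne_zero i)
    (qFactorial_ne_zero j)) (qFactorial_ne_zero k)) ?_
  have h₁ := gaussTrinom_mul_qFactorial (show i + 1 + j + k = n + 1 by omega)
  rw [qFactorial_succ i, qFactorial_succ n] at h₁
  linear_combination h₁ - (1 - X ^ (n + 1)) * gaussTrinom_mul_qFactorial h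

section
variable {A : Type*} [CommRing A] (q : A)

noncomputable def negQPochhammer (n : ℕ) : A := ∏ k ∈ range n, (1 + q ^ (k + 1))

lemma negQPochhammer_succ (n : ℕ) :
    negQPochhammer q (n + 1) = negQPochhammer q n * (1 + q ^ (n + 1)) :=
  prod_range_succ _ _

variable [Algebra ℚ A]

lemma sum_aeval_gaussPoly_mul_pow_reflect (K : ℕ) :
    ∑ m ∈ range (K + 1), aeval (q ^ 2) (gaussPoly K m) * q ^ m =
      ∑ m ∈ range (K + 1), aeval (q ^ 2) (gaussPoly K m) * q ^ (K - m) := by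
  rw [← sum_range_reflect]
  refine sum_congr rfl fun m hm => ?_
  have hm : m ≤ K := Nat.lt_succ_iff.mp (mem_range.mp hm)
  rw [add_tsub_cancel_right, gaussPoly_symm (Nat.sub_add_cancel hm)]

lemma sum_aeval_gaussPoly_mul_pow (K : ℕ) :
    ∑ m ∈ range (K + 1), aeval (q ^ 2) (gaussPoly K m) * q ^ (K - m) = negQPochhammer q K := by
  induction K with
  | zero => simp [gaussPoly_zero_right, negQPochhammer]
  | succ K ih =>
    have pascal : ∀ m ∈ range (K + 1),
        aeval (q ^ 2) (gaussPoly (K + 1) (m + 1)) * q ^ (K + 1 - (m + 1)) =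
          aeval (q ^ 2) (gaussPoly K m) * q ^ (K - m) +
            q ^ (K + 1) * (aeval (q ^ 2) (gaussPoly K (m + 1)) * q ^ (m + 1)) := by
      intro m hm
      obtain ⟨d, rfl⟩ : ∃ d, K = m + d := ⟨K - m, by have := mem_range.mp hm; omega⟩
      rw [gaussPoly_succ_succ, map_add, map_mul, map_pow, aeval_X,
        show m + d + 1 - (m + 1) = d by omega, show m + d - m = d by omega]
      ring
    have shifted : ∑ m ∈ range (K + 1), aeval (q ^ 2) (gaussPoly K (m + 1)) * q ^ (m + 1) + 1 =
        negQPochhammer q K := by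
      have h := sum_range_succ' (fun m => aeval (q ^ 2) (gaussPoly K m) * q ^ m) (K + 1)
      rw [sum_range_succ, gaussPoly_of_lt K.lt_succ_self, sum_aeval_gaussPoly_mul_pow_reflect, ih]
        at h
      simpa [gaussPoly_zero_right] using h.symm
    rw [sum_range_succ', sum_congr rfl pascal, sum_add_distrib, ← mul_sum, ih,
      negQPochhammer_succ, gaussPoly_zero_right, map_one, Nat.sub_zero]
    linear_combination q ^ (K + 1) * shifted

noncomputable def gaussTripleSum (ν N i j : ℕ) : A :=
  ∑ l ∈ range (N + 1),
    aeval (q ^ 2) (gaussPoly N l * gaussPoly (l + ν) i * gaussPoly (N - l) j) * q ^ (N - l - j)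

lemma gaussTripleSum_zero (N i j : ℕ) :
    gaussTripleSum q 0 N i j =
      negQPochhammer q (N - i - j) * aeval (q ^ 2) (gaussTrinom N i j) := by
  have vanish : ∀ l, l < i ∨ N - l < j →
      gaussPoly N l * gaussPoly (l + 0) i * gaussPoly (N - l) j = 0 := by
    rintro l (hl | hl)
    · rw [add_zero, gaussPoly_of_lt hl, mul_zero, zero_mul]
    · rw [gaussPoly_of_lt hl, mul_zero]
  rcases lt_or_ge N (i + j) with hN | hN
  · rw [gaussTrinom_of_lt hN, map_zero, mul_zero]
    refine sum_eq_zero fun l hl => ?_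
    have hl : l ≤ N := Nat.lt_succ_iff.mp (mem_range.mp hl)
    rw [vanish l (by omega), map_zero, zero_mul]
  obtain ⟨k, rfl⟩ : ∃ k, N = i + j + k := ⟨N - (i + j), by omega⟩
  rw [gaussTripleSum, show i + j + k + 1 = i + (k + 1 + j) by ring, sum_range_add, sum_range_add,
    sum_eq_zero (s := range i) fun l hl => by
      rw [vanish l (.inl (mem_range.mp hl)), map_zero, zero_mul],
    sum_eq_zero (s := range j) fun m hm => by
      rw [vanish _ (.inr (by have := mem_range.mp hm; omega)), map_zero, zero_mul],
    zero_add, add_zero, show i + j + k - i - j = k by omega, ← sum_aeval_gaussPoly_mul_pow,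
    mul_comm, mul_sum]
  refine sum_congr rfl fun m hm => ?_
  have hm : m ≤ k := Nat.lt_succ_iff.mp (mem_range.mp hm)
  rw [add_zero, gaussPoly_mul_gaussPoly_mul_gaussPoly rfl hm, map_mul,
    show i + j + k - (i + m) - j = k - m by omega]
  ring

lemma aeval_sq_one_sub_X_pow (n : ℕ) :
    aeval (q ^ 2) (1 - X ^ n : ℚ[X]) = 1 - q ^ (2 * n) := by
  rw [map_sub, map_one, map_pow, aeval_X, ← pow_mul]

lemma negQPochhammer_mul_gaussTrinom_succ (N i j : ℕ) :
    negQPochhammer q (N - i - j) * aeval (q ^ 2) (gaussTrinom N i j) * (1 - q ^ (2 * (N + 1))) =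
      negQPochhammer q (N + 1 - i - j) * aeval (q ^ 2) (gaussTrinom (N + 1) i j) *
        (1 - q ^ (N + 1 - i - j)) := by
  rcases lt_or_ge N (i + j) with hN | hN
  · rw [gaussTrinom_of_lt hN, show N + 1 - i - j = 0 by omega]
    simp
  obtain ⟨k, rfl⟩ : ∃ k, N = i + j + k := ⟨N - (i + j), by omega⟩
  have h := congrArg (aeval (q ^ 2)) (gaussTrinom_succ_mul (rfl : i + j + k = _))
  simp only [map_mul, aeval_sq_one_sub_X_pow] at h
  rw [show i + j + k - i - j = k by omega, show i + j + k + 1 - i - j = k + 1 by omega,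
    negQPochhammer_succ]
  linear_combination (-(negQPochhammer q k)) * h

lemma negQPochhammer_mul_gaussTrinom_succ_succ (N i j : ℕ) :
    negQPochhammer q (N - i - j) * aeval (q ^ 2) (gaussTrinom N i j) * (1 - q ^ (2 * (N + 1))) =
      negQPochhammer q (N - i - j) * aeval (q ^ 2) (gaussTrinom (N + 1) (i + 1) j) *
        (1 - q ^ (2 * (i + 1))) := by
  rcases lt_or_ge N (i + j) with hN | hN
  · rw [gaussTrinom_of_lt hN, gaussTrinom_of_lt (show N + 1 < i + 1 + j by omega)]
    simp
  obtain ⟨k, rfl⟩ : ∃ k, N = i + j + k := ⟨N - (i + j), by omega⟩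
  have h := congrArg (aeval (q ^ 2)) (gaussTrinom_succ_succ_mul (rfl : i + j + k = _))
  simp only [map_mul, aeval_sq_one_sub_X_pow] at h
  linear_combination (-(negQPochhammer q (i + j + k - i - j))) * h

lemma gaussTripleSum_one_zero (N j : ℕ) :
    gaussTripleSum q 1 N 0 j = gaussTripleSum q 0 N 0 j := by
  simp only [gaussTripleSum, gaussPoly_zero_right]

lemma gaussTripleSum_one_succ (N i j : ℕ) :
    gaussTripleSum q 1 N (i + 1) j =
      gaussTripleSum q 0 N i j + q ^ (2 * (i + 1)) * gaussTripleSum q 0 N (i + 1) j := by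
  simp only [gaussTripleSum, mul_sum, ← sum_add_distrib, add_zero, gaussPoly_succ_succ]
  refine sum_congr rfl fun l _ => ?_
  simp only [map_mul, map_add, map_pow, aeval_X, ← pow_mul]
  ring

lemma gaussTripleSum_one_mul (N i j : ℕ) :
    gaussTripleSum q 1 N i j * (1 - q ^ (2 * (N + 1))) =
      negQPochhammer q (N + 1 - i - j) * aeval (q ^ 2) (gaussTrinom (N + 1) i j) *
        (1 - q ^ (N + i + 1 - j)) := by
  cases i with
  | zero =>
    rw [gaussTripleSum_one_zero, gaussTripleSum_zero, negQPochhammer_mul_gaussTrinom_succ,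
      Nat.add_zero, Nat.sub_zero]
  | succ i =>
    have habsorb_i := negQPochhammer_mul_gaussTrinom_succ_succ q N i j
    have habsorb_k := negQPochhammer_mul_gaussTrinom_succ q N (i + 1) j
    rw [gaussTripleSum_one_succ, gaussTripleSum_zero, gaussTripleSum_zero]
    rcases lt_or_ge N (i + j) with hN | hN
    · rw [gaussTrinom_of_lt (show N + 1 < i + 1 + j by omega), map_zero] at habsorb_i habsorb_k ⊢
      linear_combination habsorb_i + q ^ (2 * (i + 1)) * habsorb_k
    obtain ⟨k, rfl⟩ : ∃ k, N = i + j + k := ⟨N - (i + j), by omega⟩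
    rw [show i + j + k + 1 - (i + 1) - j = k by omega] at habsorb_k ⊢
    rw [show i + j + k - i - j = k by omega] at habsorb_i ⊢
    rw [show i + j + k + (i + 1) + 1 - j = 2 * (i + 1) + k by omega]
    linear_combination habsorb_i + q ^ (2 * (i + 1)) * habsorb_k
end

theorem stmt12 (N i j ν : ℕ) (hν : ν ≤ 1) :
    ∑ l ∈ Finset.range (N + 1),
      Polynomial.aeval (PowerSeries.X ^ 2 : PowerSeries ℚ)
        (gaussPoly N l * gaussPoly (l + ν) i * gaussPoly (N - l) j) *
      PowerSeries.X ^ (N - l - j) =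
    (∏ n ∈ Finset.range (N + ν - i - j), (1 + PowerSeries.X ^ (n + 1))) *
      Polynomial.aeval (PowerSeries.X ^ 2 : PowerSeries ℚ)
        (gaussPoly (N + ν) i * gaussPoly (N + ν - i) j) *
      (1 - (ν : PowerSeries ℚ) * PowerSeries.X ^ (N + i + 1 - j)) *
      (1 - (ν : PowerSeries ℚ) * PowerSeries.X ^ (2 * (N + 1)))⁻¹ := by
  rw [PowerSeries.eq_mul_inv_iff_mul_eq (by simp)]
  interval_cases ν
  · simp only [Nat.cast_zero, zero_mul, sub_zero, mul_one]
    exact gaussTripleSum_zero (PowerSeries.X : PowerSeries ℚ) N i j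
  · simp only [Nat.cast_one, one_mul]
    exact gaussTripleSum_one_mul (PowerSeries.X : PowerSeries ℚ) N i j
end
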